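/- For κ > 0 and p ≥ 2, the function κ ↦ κ / A_p(κ) is strictly convex on (0, ∞). -/

import Mathlib

open Real

/-- Modified Bessel function of the first kind, `I_v(κ)`. -/
noncomputable def besselI (v κ : ℝ) : ℝ :=
  ∑' q : ℕ, (1 / (q.factorial * Real.Gamma (q + v + 1))) * (κ / 2) ^ ((2 * q : ℝ) + v)

/-- The Bessel ratio `A_p(κ) = I_{p/2}(κ) / I_{p/2-1}(κ)`. -/
noncomputable def Ap (p : ℕ) (κ : ℝ) : ℝ :=
  besselI (p / 2 : ℝ) κ / besselI ((p / 2 : ℝ) - 1) κ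

/-!
Write `I_v(κ) = (κ/2)^v g_v(κ²/4)` with the entire series `g_v(t) = ∑ t^q / (q! Γ(q+v+1))`.
Then `κ / A_p(κ) = 2 φ(κ²/4)` for `φ = g_{ν-1} / g_ν`, `ν = p/2`, and the second derivative of
`κ ↦ 2 φ(κ²/4)` is `φ' + 2 t φ''` at `t = κ²/4`. Since `g_v' = g_{v+1}` and
`g_{ν-1} = ν g_ν + t g_{ν+1}`, the ratio `φ` solves the Riccati equation `t φ' = t + ν φ - φ²`
with `φ(0) = ν`. Two barrier arguments on this equation (a function that is positive at `0` and
has positive derivative at each of its zeros stays positive) give first the lower bound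
`2φ - (ν - 1/2) > √(4t + (ν - 1/2)²)`, and then, with it, `φ' + 2 t φ'' > 0`.
-/

open Set Filter
open scoped ContDiff

noncomputable def besselCoeff (μ : ℝ) (q : ℕ) : ℝ := 1 / (q.factorial * Gamma (q + μ + 1))

noncomputable def besselSeries (μ t : ℝ) : ℝ := ∑' q : ℕ, besselCoeff μ q * t ^ q

section BesselSeries

variable {μ : ℝ}

lemma natCast_add_add_one_pos (hμ : -1 < μ) (q : ℕ) : 0 < (q : ℝ) + μ + 1 := by
  linarith [q.cast_nonneg (α := ℝ)]

lemma besselCoeff_pos (hμ : -1 < μ) (q : ℕ) : 0 < besselCoeff μ q := by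
  have := Gamma_pos_of_pos (natCast_add_add_one_pos hμ q)
  unfold besselCoeff
  positivity

lemma besselCoeff_succ_mul (μ : ℝ) (q : ℕ) :
    besselCoeff μ (q + 1) * (q + 1) = besselCoeff (μ + 1) q := by
  have hq : ((q + 1 : ℕ) : ℝ) + μ + 1 = q + (μ + 1) + 1 := by push_cast; ring
  unfold besselCoeff
  rw [hq, Nat.factorial_succ]
  push_cast
  field_simp

lemma besselCoeff_eq_mul (hμ : -1 < μ) (q : ℕ) :
    besselCoeff μ q = (q + μ + 1) * besselCoeff (μ + 1) q := by
  have hq := natCast_add_add_one_pos hμ q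
  have := Gamma_pos_of_pos hq
  unfold besselCoeff
  rw [show (q : ℝ) + (μ + 1) + 1 = q + μ + 1 + 1 by ring, Gamma_add_one hq.ne']
  field_simp

lemma summable_besselCoeff_mul_pow (hμ : -1 < μ) (t : ℝ) :
    Summable fun q => besselCoeff μ q * t ^ q := by
  refine summable_of_ratio_norm_eventually_le (r := 1 / 2) (by norm_num) ?_
  filter_upwards [eventually_ge_atTop ⌈2 * |t|⌉₊, eventually_ge_atTop 1] with q hqt hq1
  have hqt : 2 * |t| ≤ q := Nat.ceil_le.mp hqt
  have hq1 : (1 : ℝ) ≤ q := by exact_mod_cast hq1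
  have hratio : besselCoeff μ (q + 1) * ((q + 1) * (q + μ + 1)) = besselCoeff μ q := by
    rw [besselCoeff_eq_mul hμ q, ← besselCoeff_succ_mul]
    ring
  have hden : 2 * |t| ≤ (q + 1) * (q + μ + 1) := by nlinarith [natCast_add_add_one_pos hμ q]
  have hc := (besselCoeff_pos hμ (q + 1)).le
  calc ‖besselCoeff μ (q + 1) * t ^ (q + 1)‖ = besselCoeff μ (q + 1) * |t| * |t| ^ q := by
        rw [norm_mul, norm_pow, Real.norm_of_nonneg hc, Real.norm_eq_abs, pow_succ]
        ring
    _ ≤ besselCoeff μ (q + 1) * ((q + 1) * (q + μ + 1) / 2) * |t| ^ q := by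
        gcongr
        linarith
    _ = 1 / 2 * ‖besselCoeff μ q * t ^ q‖ := by
        rw [norm_mul, norm_pow, Real.norm_of_nonneg (besselCoeff_pos hμ q).le, ← hratio,
          Real.norm_eq_abs]
        ring

lemma hasSum_besselCoeff_mul_deriv_pow (hμ : -1 < μ) (t : ℝ) :
    HasSum (fun q => besselCoeff μ q * (q * t ^ (q - 1))) (besselSeries (μ + 1) t) := by
  refine (hasSum_nat_add_iff' 1).mp ?_
  have hterm (q : ℕ) : besselCoeff μ (q + 1) * (((q + 1 : ℕ) : ℝ) * t ^ (q + 1 - 1)) =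
      besselCoeff (μ + 1) q * t ^ q := by
    rw [← besselCoeff_succ_mul, Nat.add_sub_cancel]
    push_cast
    ring
  simp only [hterm, Finset.range_one, Finset.sum_singleton, CharP.cast_eq_zero, zero_mul,
    mul_zero, sub_zero]
  exact (summable_besselCoeff_mul_pow (by linarith : -1 < μ + 1) t).hasSum

lemma hasDerivAt_besselSeries (hμ : -1 < μ) (t : ℝ) :
    HasDerivAt (besselSeries μ) (besselSeries (μ + 1) t) t := by
  set R := |t| + 1
  have hbound : ∀ (q : ℕ), ∀ y ∈ Ioo (-R) R,
      ‖besselCoeff μ q * (q * y ^ (q - 1))‖ ≤ besselCoeff μ q * (q * R ^ (q - 1)) := by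
    intro q y hy
    have hyR : |y| ≤ R := abs_le.mpr ⟨hy.1.le, hy.2.le⟩
    rw [norm_mul, norm_mul, norm_pow, Real.norm_of_nonneg (besselCoeff_pos hμ q).le,
      Real.norm_natCast, Real.norm_eq_abs]
    gcongr
    exact (besselCoeff_pos hμ q).le
  have htR : t ∈ Ioo (-R) R := ⟨by linarith [neg_abs_le t], by linarith [le_abs_self t]⟩
  have := hasDerivAt_tsum_of_isPreconnected (hasSum_besselCoeff_mul_deriv_pow hμ R).summable
    isOpen_Ioo isPreconnected_Ioo (fun q y _ => (hasDerivAt_pow q y).const_mul (besselCoeff μ q))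
    hbound htR (summable_besselCoeff_mul_pow hμ t) htR
  rwa [(hasSum_besselCoeff_mul_deriv_pow hμ t).tsum_eq] at this

lemma besselSeries_recurrence (hμ : -1 < μ) (t : ℝ) :
    besselSeries μ t = (μ + 1) * besselSeries (μ + 1) t + t * besselSeries (μ + 2) t := by
  have hsum := ((summable_besselCoeff_mul_pow (by linarith : -1 < μ + 1) t).hasSum.mul_left
    (μ + 1)).add ((hasSum_besselCoeff_mul_deriv_pow (by linarith : -1 < μ + 1) t).mul_left t)
  rw [add_assoc, one_add_one_eq_two] at hsum
  have hterm (q : ℕ) : (μ + 1) * (besselCoeff (μ + 1) q * t ^ q) +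
      t * (besselCoeff (μ + 1) q * (q * t ^ (q - 1))) = besselCoeff μ q * t ^ q := by
    rw [besselCoeff_eq_mul hμ]
    rcases q with _ | q
    · simp
    · rw [Nat.add_sub_cancel, pow_succ]
      ring
  simp only [hterm] at hsum
  exact (summable_besselCoeff_mul_pow hμ t).hasSum.unique hsum

lemma besselSeries_pos (hμ : -1 < μ) {t : ℝ} (ht : 0 ≤ t) : 0 < besselSeries μ t :=
  (summable_besselCoeff_mul_pow hμ t).tsum_pos
    (fun q => mul_nonneg (besselCoeff_pos hμ q).le (pow_nonneg ht q)) 0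
    (by simpa using besselCoeff_pos hμ 0)

lemma besselSeries_zero (μ : ℝ) : besselSeries μ 0 = 1 / Gamma (μ + 1) := by
  rw [besselSeries, tsum_eq_single 0 fun q hq => by simp [hq]]
  simp [besselCoeff]

lemma iteratedDeriv_besselSeries (hμ : -1 < μ) (n : ℕ) :
    iteratedDeriv n (besselSeries μ) = besselSeries (μ + n) := by
  induction n with
  | zero => simp
  | succ n ih =>
    ext t
    rw [iteratedDeriv_succ, ih,
      (hasDerivAt_besselSeries (by linarith [n.cast_nonneg (α := ℝ)]) t).deriv]
    push_cast
    rw [add_assoc]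

lemma contDiff_besselSeries (hμ : -1 < μ) : ContDiff ℝ ∞ (besselSeries μ) :=
  contDiff_of_differentiable_iteratedDeriv fun n _ => by
    rw [iteratedDeriv_besselSeries hμ]
    exact fun t =>
      (hasDerivAt_besselSeries (by linarith [n.cast_nonneg (α := ℝ)]) t).differentiableAt

end BesselSeries

lemma pos_of_deriv_pos_of_eq_zero {F F' : ℝ → ℝ} {a : ℝ}
    (hF : ∀ t ∈ Ici a, HasDerivAt F (F' t) t) (ha : 0 < F a)
    (hzero : ∀ t ∈ Ioi a, F t = 0 → 0 < F' t) : ∀ t ∈ Ici a, 0 < F t := by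
  have hnonneg (b : ℝ) : ∀ t ∈ Icc a b, 0 ≤ F t := by
    have := image_le_of_deriv_right_lt_deriv_boundary (f := fun t => -F t) (f' := fun t => -F' t)
      (b := b) (B := 0) (B' := 0) (fun t ht => (hF t ht.1).continuousAt.neg.continuousWithinAt)
      (fun t ht => (hF t ht.1).neg.hasDerivWithinAt) (by simpa using ha.le)
      (fun _ => hasDerivAt_const _ _) fun t ht hFt => ?_
    · exact fun t ht => by simpa using this ht
    rcases eq_or_lt_of_le ht.1 with rfl | hat
    · simp only [Pi.zero_apply, neg_eq_zero] at hFt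
      exact absurd hFt ha.ne'
    · simpa using hzero t hat (by simpa using hFt)
  intro t ht
  rcases eq_or_lt_of_le (mem_Ici.mp ht) with rfl | hat
  · exact ha
  -- a zero of `F ≥ 0` inside `(a, t + 1)` is a local minimum, where `F'` would vanish
  refine (hnonneg (t + 1) t ⟨hat.le, by linarith⟩).lt_of_ne' fun hFt => ?_
  have hmin : IsLocalMin F t := by
    filter_upwards [Ioo_mem_nhds hat (lt_add_one t)] with s hs
    rw [hFt]
    exact hnonneg (t + 1) s (Ioo_subset_Icc_self hs)
  exact (hzero t hat hFt).ne' (hmin.hasDerivAt_eq_zero (hF t ht))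

lemma HasDerivAt.unique_of_eqOn_Ici {f g : ℝ → ℝ} {f' g' a t : ℝ} (hf : HasDerivAt f f' t)
    (hg : HasDerivAt g g' t) (hfg : EqOn f g (Ici a)) (ht : t ∈ Ici a) : f' = g' :=
  (uniqueDiffOn_Ici a t ht).eq_deriv _ hf.hasDerivWithinAt (hg.hasDerivWithinAt.congr hfg (hfg ht))

section Riccati

variable {ν : ℝ} {φ φ₁ φ₂ φ₃ : ℝ → ℝ}

lemma riccati_deriv (hφ : ∀ t ∈ Ici 0, HasDerivAt φ (φ₁ t) t)
    (hφ₁ : ∀ t ∈ Ici 0, HasDerivAt φ₁ (φ₂ t) t)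
    (hric : EqOn (fun t => t * φ₁ t) (fun t => t + ν * φ t - φ t ^ 2) (Ici 0)) :
    EqOn (fun t => φ₁ t + t * φ₂ t) (fun t => 1 + ν * φ₁ t - 2 * φ t * φ₁ t) (Ici 0) := by
  intro t ht
  have hl : HasDerivAt (fun t => t * φ₁ t) (1 * φ₁ t + t * φ₂ t) t :=
    (hasDerivAt_id' t).mul (hφ₁ t ht)
  have hr : HasDerivAt (fun t => t + ν * φ t - φ t ^ 2) (1 + ν * φ₁ t - 2 * φ t * φ₁ t) t := by
    refine (((hasDerivAt_id' t).add ((hφ t ht).const_mul ν)).sub ((hφ t ht).pow 2)).congr_deriv ?_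
    push_cast
    ring
  simpa using hl.unique_of_eqOn_Ici hr hric ht

lemma riccati_deriv_two (hφ : ∀ t ∈ Ici 0, HasDerivAt φ (φ₁ t) t)
    (hφ₁ : ∀ t ∈ Ici 0, HasDerivAt φ₁ (φ₂ t) t) (hφ₂ : ∀ t ∈ Ici 0, HasDerivAt φ₂ (φ₃ t) t)
    (hric : EqOn (fun t => t * φ₁ t) (fun t => t + ν * φ t - φ t ^ 2) (Ici 0)) :
    EqOn (fun t => 2 * φ₂ t + t * φ₃ t)
      (fun t => ν * φ₂ t - 2 * φ₁ t ^ 2 - 2 * φ t * φ₂ t) (Ici 0) := by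
  intro t ht
  have hl : HasDerivAt (fun t => φ₁ t + t * φ₂ t) (φ₂ t + (1 * φ₂ t + t * φ₃ t)) t :=
    (hφ₁ t ht).add ((hasDerivAt_id' t).mul (hφ₂ t ht))
  have hr : HasDerivAt (fun t => 1 + ν * φ₁ t - 2 * φ t * φ₁ t)
      (ν * φ₂ t - 2 * φ₁ t ^ 2 - 2 * φ t * φ₂ t) t := by
    refine ((((hφ₁ t ht).const_mul ν).const_add 1).sub
      (((hφ t ht).const_mul 2).mul (hφ₁ t ht))).congr_deriv ?_
    ring
  have := hl.unique_of_eqOn_Ici hr (riccati_deriv hφ hφ₁ hric) ht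
  simp only at this ⊢
  linarith

lemma riccati_deriv_zero_pos (hν : -1 < ν) (hφ : ∀ t ∈ Ici 0, HasDerivAt φ (φ₁ t) t)
    (hφ₁ : ∀ t ∈ Ici 0, HasDerivAt φ₁ (φ₂ t) t)
    (hric : EqOn (fun t => t * φ₁ t) (fun t => t + ν * φ t - φ t ^ 2) (Ici 0)) (h0 : φ 0 = ν) :
    0 < φ₁ 0 := by
  have := riccati_deriv hφ hφ₁ hric self_mem_Ici
  simp only [zero_mul, add_zero, h0] at this
  nlinarith

lemma sqrt_lt_of_riccati (hν : 1 / 2 < ν) (hφ : ∀ t ∈ Ici 0, HasDerivAt φ (φ₁ t) t)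
    (hric : EqOn (fun t => t * φ₁ t) (fun t => t + ν * φ t - φ t ^ 2) (Ici 0)) (h0 : φ 0 = ν) :
    ∀ t ∈ Ici 0, √(4 * t + (ν - 1 / 2) ^ 2) < 2 * φ t - (ν - 1 / 2) := by
  set s := ν - 1 / 2
  have hs : 0 < s := by simp only [s]; linarith
  have hpos (t : ℝ) (ht : t ∈ Ici 0) : 0 < 4 * t + s ^ 2 := by
    have : 0 ≤ t := ht
    positivity
  have key := pos_of_deriv_pos_of_eq_zero (F := fun t => 2 * φ t - s - √(4 * t + s ^ 2))
    (F' := fun t => 2 * φ₁ t - 4 / (2 * √(4 * t + s ^ 2))) (a := 0) (fun t ht => ?_) ?_ ?_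
  · exact fun t ht => sub_pos.mp (by simpa [sub_sub] using key t ht)
  · exact (((hφ t ht).const_mul 2).sub_const s).sub
      ((((hasDerivAt_id' t).const_mul 4).add_const _).sqrt (hpos t ht).ne' |>.congr_deriv (by ring))
  · simp only [mul_zero, zero_add, sqrt_sq hs.le, h0, s]
    linarith
  · -- on the barrier `2φ - s = R` the Riccati equation reads `4tφ₁ = R + s`, and `R² + sR > 4t`
    intro t ht hFt
    set R := √(4 * t + s ^ 2)
    have hR : 0 < R := sqrt_pos.mpr (hpos t (mem_Ici_of_Ioi ht))
    have hR2 : R ^ 2 = 4 * t + s ^ 2 := sq_sqrt (hpos t (mem_Ici_of_Ioi ht)).le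
    have hric_t : t * φ₁ t = t + ν * φ t - φ t ^ 2 := hric (mem_Ici_of_Ioi ht)
    have hφt : 2 * φ t = R + s := by linarith
    have h4 : 4 * t * φ₁ t = R + s := by
      have hν' : ν = s + 1 / 2 := by simp only [s]; ring
      nlinarith
    have hφ₁R : 1 < φ₁ t * R := by
      have : 0 < 4 * t * (φ₁ t * R - 1) := by nlinarith
      nlinarith [mem_Ioi.mp ht]
    rw [show 4 / (2 * R) = 2 / R by ring, sub_pos, div_lt_iff₀ hR]
    linarith

lemma riccati_convexity (hν : 1 / 2 < ν) (hφ : ∀ t ∈ Ici 0, HasDerivAt φ (φ₁ t) t)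
    (hφ₁ : ∀ t ∈ Ici 0, HasDerivAt φ₁ (φ₂ t) t) (hφ₂ : ∀ t ∈ Ici 0, HasDerivAt φ₂ (φ₃ t) t)
    (hric : EqOn (fun t => t * φ₁ t) (fun t => t + ν * φ t - φ t ^ 2) (Ici 0)) (h0 : φ 0 = ν) :
    ∀ t ∈ Ici 0, 0 < φ₁ t + 2 * t * φ₂ t := by
  refine pos_of_deriv_pos_of_eq_zero (F' := fun t => 3 * φ₂ t + 2 * t * φ₃ t) (fun t ht => ?_)
    (by simpa using riccati_deriv_zero_pos (by linarith) hφ hφ₁ hric h0) fun t ht hG => ?_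
  · exact ((hφ₁ t ht).add (((hasDerivAt_id' t).const_mul 2).mul (hφ₂ t ht))).congr_deriv
      (by ring)
  · -- at a zero of `φ₁ + 2tφ₂`, with `u = 2φ - (ν - 1/2)`, the differentiated Riccati equations
    -- give `φ₁ u = 1` and `t (3φ₂ + 2tφ₃) = 1 - 4tφ₁²`, positive as `u² > 4t`
    set u := 2 * φ t - (ν - 1 / 2)
    have ht' : 0 < t := ht
    have hlow := sqrt_lt_of_riccati hν hφ hric h0 t (mem_Ici_of_Ioi ht)
    have hu : 0 < u := (sqrt_nonneg _).trans_lt hlow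
    have hu2 : 4 * t < u ^ 2 := by nlinarith [(sqrt_lt' hu).mp hlow]
    have h1 : φ₁ t + t * φ₂ t = 1 + ν * φ₁ t - 2 * φ t * φ₁ t :=
      riccati_deriv hφ hφ₁ hric (mem_Ici_of_Ioi ht)
    have h2 : 2 * φ₂ t + t * φ₃ t = ν * φ₂ t - 2 * φ₁ t ^ 2 - 2 * φ t * φ₂ t :=
      riccati_deriv_two hφ hφ₁ hφ₂ hric (mem_Ici_of_Ioi ht)
    have hu1 : φ₁ t * u = 1 := by linear_combination h1 - hG / 2
    have htG : t * (3 * φ₂ t + 2 * t * φ₃ t) = 1 - 4 * t * φ₁ t ^ 2 := by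
      linear_combination 2 * t * h2 - u * hG + hu1
    have hφ₁sq : 0 < φ₁ t ^ 2 := by
      have : φ₁ t ≠ 0 := left_ne_zero_of_mul_eq_one hu1
      positivity
    have : 4 * t * φ₁ t ^ 2 < 1 := by nlinarith [mul_lt_mul_of_pos_right hu2 hφ₁sq]
    exact pos_of_mul_pos_right (by linarith) ht'.le

end Riccati

lemma ContDiffOn.hasDerivAt_deriv {f : ℝ → ℝ} {U : Set ℝ} (hf : ContDiffOn ℝ ∞ f U)
    (hU : IsOpen U) {t : ℝ} (ht : t ∈ U) : HasDerivAt f (deriv f t) t :=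
  ((hf.contDiffAt (hU.mem_nhds ht)).differentiableAt (by simp)).hasDerivAt

lemma ContDiffOn.iterate_deriv_of_isOpen {f : ℝ → ℝ} {U : Set ℝ} (hf : ContDiffOn ℝ ∞ f U)
    (hU : IsOpen U) (n : ℕ) : ContDiffOn ℝ ∞ (deriv^[n] f) U := by
  induction n with
  | zero => exact hf
  | succ n ih =>
    rw [Function.iterate_succ_apply']
    exact ih.deriv_of_isOpen hU (by simp)

noncomputable def besselRatio (ν t : ℝ) : ℝ := besselSeries (ν - 1) t / besselSeries ν t

section BesselRatio

variable {ν : ℝ}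

lemma besselRatio_zero (hν : 0 < ν) : besselRatio ν 0 = ν := by
  rw [besselRatio, besselSeries_zero, besselSeries_zero, sub_add_cancel, Gamma_add_one hν.ne']
  have := Gamma_pos_of_pos hν
  field_simp

lemma contDiffOn_besselRatio (hν : 0 < ν) :
    ContDiffOn ℝ ∞ (besselRatio ν) {t | besselSeries ν t ≠ 0} := fun t ht =>
  ((contDiff_besselSeries (by linarith)).contDiffAt.div
    (contDiff_besselSeries (by linarith)).contDiffAt ht).contDiffWithinAt

lemma isOpen_besselSeries_ne_zero (hν : -1 < ν) : IsOpen {t | besselSeries ν t ≠ 0} :=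
  isOpen_ne_fun (contDiff_besselSeries hν).continuous continuous_const

lemma besselRatio_riccati (hν : 0 < ν) {t : ℝ} (ht : besselSeries ν t ≠ 0) :
    t * deriv (besselRatio ν) t = t + ν * besselRatio ν t - besselRatio ν t ^ 2 := by
  have hderiv : HasDerivAt (besselRatio ν) _ t :=
    (hasDerivAt_besselSeries (by linarith : -1 < ν - 1) t).div
      (hasDerivAt_besselSeries (by linarith : -1 < ν) t) ht
  have hrec := besselSeries_recurrence (by linarith : -1 < ν - 1) t
  rw [sub_add_cancel] at hderiv hrec
  rw [show ν - 1 + 2 = ν + 1 by ring] at hrec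
  rw [hderiv.deriv, besselRatio]
  field_simp
  linear_combination besselSeries (ν - 1) t * hrec

lemma hasDerivAt_iterate_deriv_besselRatio (hν : 0 < ν) (n : ℕ) {t : ℝ} (ht : 0 ≤ t) :
    HasDerivAt (deriv^[n] (besselRatio ν)) (deriv^[n + 1] (besselRatio ν) t) t := by
  rw [Function.iterate_succ_apply']
  exact ((contDiffOn_besselRatio hν).iterate_deriv_of_isOpen
    (isOpen_besselSeries_ne_zero (by linarith)) n).hasDerivAt_deriv
    (isOpen_besselSeries_ne_zero (by linarith)) (besselSeries_pos (by linarith) ht).ne'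

end BesselRatio

lemma strictConvexOn_comp_sq_div_four {φ φ₁ φ₂ : ℝ → ℝ}
    (hφ : ∀ t ∈ Ioi 0, HasDerivAt φ (φ₁ t) t) (hφ₁ : ∀ t ∈ Ioi 0, HasDerivAt φ₁ (φ₂ t) t)
    (hpos : ∀ t ∈ Ioi 0, 0 < φ₁ t + 2 * t * φ₂ t) :
    StrictConvexOn ℝ (Ioi 0) fun κ => φ (κ ^ 2 / 4) := by
  have hsq (κ : ℝ) : HasDerivAt (fun κ : ℝ => κ ^ 2 / 4) (κ / 2) κ :=
    ((hasDerivAt_pow 2 κ).div_const 4).congr_deriv (by push_cast; ring)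
  have hκ {κ : ℝ} (h : κ ∈ Ioi 0) : κ ^ 2 / 4 ∈ Ioi 0 := by
    have : 0 < κ := h
    exact mem_Ioi.mpr (by positivity)
  have hF {κ : ℝ} (h : κ ∈ Ioi 0) :
      HasDerivAt (fun κ => φ (κ ^ 2 / 4)) (φ₁ (κ ^ 2 / 4) * (κ / 2)) κ :=
    (hφ _ (hκ h)).comp κ (hsq κ)
  have hF' {κ : ℝ} (h : κ ∈ Ioi 0) : HasDerivAt (fun κ => φ₁ (κ ^ 2 / 4) * (κ / 2))
      ((φ₁ (κ ^ 2 / 4) + 2 * (κ ^ 2 / 4) * φ₂ (κ ^ 2 / 4)) / 2) κ :=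
    (((hφ₁ _ (hκ h)).comp κ (hsq κ)).mul ((hasDerivAt_id' κ).div_const 2)).congr_deriv
      (by simp only [Function.comp_apply]; ring)
  refine StrictMonoOn.strictConvexOn_of_deriv (convex_Ioi 0)
    (fun κ h => (hF h).continuousAt.continuousWithinAt) ?_
  rw [interior_Ioi]
  refine (strictMonoOn_of_deriv_pos (convex_Ioi 0)
    (fun κ h => (hF' h).continuousAt.continuousWithinAt) fun κ h => ?_).congr
    fun κ h => (hF h).deriv.symm
  rw [interior_Ioi] at h
  rw [(hF' h).deriv]
  exact half_pos (hpos _ (hκ h))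

lemma besselI_eq_rpow_mul_besselSeries (v : ℝ) {κ : ℝ} (hκ : 0 < κ) :
    besselI v κ = (κ / 2) ^ v * besselSeries v (κ ^ 2 / 4) := by
  rw [besselI, besselSeries, ← tsum_mul_left]
  congr 1 with q
  rw [rpow_add (by positivity), show (2 * q : ℝ) = ((2 * q : ℕ) : ℝ) by push_cast; ring,
    rpow_natCast, pow_mul, besselCoeff]
  ring

lemma div_Ap_eq_two_mul_besselRatio {p : ℕ} (hp : 0 < p) {κ : ℝ} (hκ : 0 < κ) :
    κ / Ap p κ = 2 * besselRatio (p / 2) (κ ^ 2 / 4) := by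
  have hν : (0 : ℝ) < p / 2 := by positivity
  have hsub := besselSeries_pos (by linarith : (-1 : ℝ) < p / 2 - 1) (by positivity : 0 ≤ κ ^ 2 / 4)
  have hmain := besselSeries_pos (by linarith : (-1 : ℝ) < p / 2) (by positivity : 0 ≤ κ ^ 2 / 4)
  have hrpow : (κ / 2) ^ ((p : ℝ) / 2) = (κ / 2) ^ ((p : ℝ) / 2 - 1) * (κ / 2) := by
    rw [← rpow_add_one (by positivity), sub_add_cancel]
  have := rpow_pos_of_pos (by positivity : 0 < κ / 2) ((p : ℝ) / 2 - 1)
  rw [Ap, besselI_eq_rpow_mul_besselSeries _ hκ, besselI_eq_rpow_mul_besselSeries _ hκ, hrpow,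
    besselRatio]
  field_simp

theorem stmt_11 (p : ℕ) (hp : 2 ≤ p) :
    StrictConvexOn ℝ (Set.Ioi 0) (fun κ : ℝ => κ / Ap p κ) := by
  set ν : ℝ := p / 2
  have hν : 1 / 2 < ν := by
    have : (2 : ℝ) ≤ p := by exact_mod_cast hp
    simp only [ν]
    linarith
  set φ := besselRatio ν
  have hφ (n : ℕ) : ∀ t ∈ Ici 0, HasDerivAt (deriv^[n] φ) (deriv^[n + 1] φ t) t :=
    fun t ht => hasDerivAt_iterate_deriv_besselRatio (by linarith) n ht
  have hric : EqOn (fun t => t * deriv^[1] φ t) (fun t => t + ν * φ t - φ t ^ 2) (Ici 0) :=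
    fun t ht => besselRatio_riccati (by linarith) (besselSeries_pos (by linarith) ht).ne'
  have hconv := riccati_convexity hν (hφ 0) (hφ 1) (hφ 2) hric (besselRatio_zero (by linarith))
  refine (strictConvexOn_comp_sq_div_four (φ := fun t => 2 * φ t)
    (φ₁ := fun t => 2 * deriv^[1] φ t) (φ₂ := fun t => 2 * deriv^[2] φ t)
    (fun t ht => (hφ 0 t (mem_Ici_of_Ioi ht)).const_mul 2)
    (fun t ht => (hφ 1 t (mem_Ici_of_Ioi ht)).const_mul 2)
    fun t ht => by nlinarith [hconv t (mem_Ici_of_Ioi ht)]).congr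
    fun κ hκ => (div_Ap_eq_two_mul_besselRatio (by omega) hκ).symm
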